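/- Let H be a finite-dimensional Hopf algebra over a field k with S² = id_H and dim_k(H)·1 ≠ 0 in k (equivalently, H semisimple and cosemisimple). Let (e_i)_{i=1..n} be a k-basis of H with dual basis (eⁱ) of H⁎. Then the linear functional λ : H → k defined by λ(x) := Σᵢ eⁱ(x·e_i) equals x ↦ Σᵢ eⁱ(e_i·x), is nonzero, is both a left integral (h₁·λ(h₂) = λ(h)·1 for all h) and a right integral (λ(h₁)·h₂ = λ(h)·1 for all h) for H in H⁎, and is cocommutative (λ(x·y) = λ(y·x) for all x, y ∈ H). -/

import Mathlib

/-!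
Write `λ(x) = tr(L_x)` and `ρ(x) = tr(R_x)`. For `q ∈ H⁎` one has
`L_{h₁ q(h₂)} = A ∘ (L_h ⊗ id) ∘ Δ` with `A(c ⊗ d) = c₁ q(c₂ S(d))`, because
`y₁ ⊗ y₂ S(y₃) = y ⊗ 1`. Cycling the trace moves it to `H ⊗ H`, where the partial trace over
the second factor of `(L_h ⊗ id) ∘ Δ ∘ A` is `q(1) L_h`: this is where `S² = id` enters,
through `x₂ S(x₁) = ε(x)`. Hence `λ(h₁) q(h₂) = q(1) λ(h)`, i.e. `λ` is a right integral, and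
symmetrically `ρ` is a left integral. Evaluating `λ(h₁) ρ(h₂)` in the two ways gives
`λ(1) ρ = ρ(1) λ`, and `λ(1) = ρ(1) = dim H ≠ 0`, so `λ = ρ` is a two-sided integral;
cocommutativity is `tr(fg) = tr(gf)`.
-/

open TensorProduct

variable {k H : Type*} [Field k] [Ring H] [HopfAlgebra k H]

/-- `swl f h = f(h₁) • h₂` in Sweedler notation. -/
noncomputable def swl (f : H →ₗ[k] k) : H →ₗ[k] H :=
  (TensorProduct.lid k H).toLinearMap ∘ₗ (f.rTensor H) ∘ₗ Coalgebra.comul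

/-- `swr f h = f(h₂) • h₁` in Sweedler notation. -/
noncomputable def swr (f : H →ₗ[k] k) : H →ₗ[k] H :=
  (TensorProduct.rid k H).toLinearMap ∘ₗ (f.lTensor H) ∘ₗ Coalgebra.comul

/-- `sw2 f g h = f(h₁) * g(h₂)`, an element of `H`, in Sweedler notation. -/
noncomputable def sw2 (f g : H →ₗ[k] H) : H →ₗ[k] H :=
  (LinearMap.mul' k H) ∘ₗ (TensorProduct.map f g) ∘ₗ Coalgebra.comul

/-- `sw2k f g h = f(h₁) * g(h₂)`, a scalar, in Sweedler notation. -/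
noncomputable def sw2k (f g : H →ₗ[k] k) : H →ₗ[k] k :=
  (LinearMap.mul' k k) ∘ₗ (TensorProduct.map f g) ∘ₗ Coalgebra.comul

/-- `comul3 h = (h₁ ⊗ h₂) ⊗ h₃`, the iterated comultiplication `(Δ ⊗ id)Δ`. -/
noncomputable def comul3 : H →ₗ[k] (H ⊗[k] H) ⊗[k] H :=
  (LinearMap.rTensor H Coalgebra.comul) ∘ₗ Coalgebra.comul

/-- `sw3 f g e h = f(h₁) * g(h₂) * e(h₃)`, an element of `H`, in Sweedler notation. -/
noncomputable def sw3 (f g e : H →ₗ[k] H) : H →ₗ[k] H :=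
  (LinearMap.mul' k H) ∘ₗ
    (TensorProduct.map ((LinearMap.mul' k H) ∘ₗ TensorProduct.map f g) e) ∘ₗ comul3

open LinearMap Coalgebra HopfAlgebra

section PartialTrace

variable {V : Type*} [AddCommGroup V] [Module k V]

theorem trace_eq_trace_sum_comp_of_sum_comp_eq_id {X J : Type*} [AddCommGroup X] [Module k X]
    [FiniteDimensional k V] [FiniteDimensional k X] [Fintype J]
    (incl : J → V →ₗ[k] X) (proj : J → X →ₗ[k] V)
    (h : ∑ j, incl j ∘ₗ proj j = LinearMap.id) (M : Module.End k X) :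
    trace k X M = trace k V (∑ j, proj j ∘ₗ M ∘ₗ incl j) := by
  conv_lhs => rw [← M.comp_id, ← h, ← Module.End.mul_eq_comp, Finset.mul_sum, map_sum]
  rw [map_sum]
  exact Finset.sum_congr rfl fun j _ => trace_comp_comm' (proj j) (M ∘ₗ incl j)

variable {W ι : Type*} [AddCommGroup W] [Module k W] [Fintype ι] (b : Module.Basis ι k W)

theorem trace_eq_sum_coord (f : Module.End k W) : trace k W f = ∑ i, b.coord i (f (b i)) := by
  classical
  simp [trace_eq_matrix_trace k b, Matrix.trace, LinearMap.toMatrix_apply]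

theorem sum_mk_flip_comp_lTensor_coord :
    ∑ j, (TensorProduct.mk k V W).flip (b j) ∘ₗ (TensorProduct.rid k V).toLinearMap ∘ₗ
      (b.coord j).lTensor V = LinearMap.id := by
  ext v w
  simp [← tmul_smul, ← tmul_sum]

theorem sum_mk_comp_rTensor_coord :
    ∑ i, TensorProduct.mk k W V (b i) ∘ₗ (TensorProduct.lid k V).toLinearMap ∘ₗ
      (b.coord i).rTensor V = LinearMap.id := by
  ext w v
  simp [smul_tmul', ← sum_tmul]

end PartialTrace

/-- `c ⊗ d ↦ c₁ ⊗ c₂ S(d)` -/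
noncomputable def twistRight : H ⊗[k] H →ₗ[k] H ⊗[k] H :=
  mul' k (H ⊗[k] H) ∘ₗ
    map comul (Algebra.TensorProduct.includeRight.toLinearMap ∘ₗ antipode k)

/-- `d ⊗ c ↦ S(d) c₁ ⊗ c₂` -/
noncomputable def twistLeft : H ⊗[k] H →ₗ[k] H ⊗[k] H :=
  mul' k (H ⊗[k] H) ∘ₗ
    map (Algebra.TensorProduct.includeLeft.toLinearMap ∘ₗ antipode k) comul

theorem twistRight_tmul (c d : H) :
    twistRight (c ⊗ₜ[k] d) = comul c * (1 ⊗ₜ antipode k d) := by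
  simp [twistRight]

theorem twistLeft_tmul (d c : H) :
    twistLeft (d ⊗ₜ[k] c) = (antipode k d ⊗ₜ 1) * comul c := by
  simp [twistLeft]

theorem twistRight_comul (y : H) : twistRight (comul (R := k) y) = y ⊗ₜ 1 := by
  suffices twistRight ∘ₗ comul = (TensorProduct.mk k H H).flip (1 : H) from congr($this y)
  have reassoc : mul' k (H ⊗[k] H) ∘ₗ
      map LinearMap.id (Algebra.TensorProduct.includeRight.toLinearMap ∘ₗ antipode k) =
        (mul' k H ∘ₗ (antipode k).lTensor H).lTensor H ∘ₗ
          (TensorProduct.assoc k H H H).toLinearMap := by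
    ext; simp
  have : twistRight ∘ₗ comul = (mul' k H ∘ₗ (antipode k).lTensor H).lTensor H ∘ₗ
      (TensorProduct.assoc k H H H).toLinearMap ∘ₗ comul.rTensor H ∘ₗ comul (R := k) := by
    rw [← comp_assoc, ← comp_assoc, ← reassoc, twistRight]
    simp only [comp_assoc, map_comp_rTensor, id_comp]
  rw [this, coassoc, ← comp_assoc, ← lTensor_comp, comp_assoc, mul_antipode_lTensor_comul]
  ext y
  simp [lTensor_comp]

theorem twistLeft_comul (y : H) : twistLeft (comul (R := k) y) = 1 ⊗ₜ y := by
  suffices twistLeft ∘ₗ comul = TensorProduct.mk k H H (1 : H) from congr($this y)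
  have reassoc : mul' k (H ⊗[k] H) ∘ₗ
      map (Algebra.TensorProduct.includeLeft.toLinearMap ∘ₗ antipode k) LinearMap.id =
        (mul' k H ∘ₗ (antipode k).rTensor H).rTensor H ∘ₗ
          (TensorProduct.assoc k H H H).symm.toLinearMap := by
    ext; simp
  have : twistLeft ∘ₗ comul = (mul' k H ∘ₗ (antipode k).rTensor H).rTensor H ∘ₗ
      (TensorProduct.assoc k H H H).symm.toLinearMap ∘ₗ comul.lTensor H ∘ₗ comul (R := k) := by
    rw [← comp_assoc, ← comp_assoc, ← reassoc, twistLeft]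
    simp only [comp_assoc, map_comp_lTensor, id_comp]
  rw [this, coassoc_symm, ← comp_assoc, ← rTensor_comp, comp_assoc, mul_antipode_rTensor_comul]
  ext y
  simp [rTensor_comp]

theorem twistRight_tmul_one_mul (x : H) (u : H ⊗[k] H) :
    twistRight ((x ⊗ₜ 1) * u) = comul x * twistRight u := by
  induction u using TensorProduct.induction_on with
  | zero => simp
  | tmul c d => simp [twistRight_tmul, Bialgebra.comul_mul, mul_assoc]
  | add u v hu hv => simp only [mul_add, map_add, hu, hv]

theorem twistLeft_mul_one_tmul (x : H) (u : H ⊗[k] H) :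
    twistLeft (u * (1 ⊗ₜ x)) = twistLeft u * comul x := by
  induction u using TensorProduct.induction_on with
  | zero => simp
  | tmul d c => simp [twistLeft_tmul, Bialgebra.comul_mul, mul_assoc]
  | add u v hu hv => simp only [add_mul, map_add, hu, hv]

theorem mulLeft_swr (q : H →ₗ[k] k) (h : H) :
    mulLeft k (swr q h) =
      ((TensorProduct.rid k H).toLinearMap ∘ₗ q.lTensor H ∘ₗ twistRight) ∘ₗ
        (mulLeft k h).rTensor H ∘ₗ comul := by
  have rid_mul (u : H ⊗[k] H) (y : H) : TensorProduct.rid k H (q.lTensor H (u * (y ⊗ₜ 1))) =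
      TensorProduct.rid k H (q.lTensor H u) * y := by
    induction u using TensorProduct.induction_on with
    | zero => simp
    | tmul c d => simp
    | add u v hu hv => simp [add_mul, hu, hv]
  have rTensor_eq (u : H ⊗[k] H) : (mulLeft k h).rTensor H u = (h ⊗ₜ 1) * u := by
    rw [← mulLeft_apply (R := k), mulLeft_tmul, mulLeft_one]; rfl
  ext y
  simp [rTensor_eq, twistRight_tmul_one_mul, twistRight_comul, rid_mul, swr]

theorem mulRight_swl (q : H →ₗ[k] k) (h : H) :
    mulRight k (swl q h) =
      ((TensorProduct.lid k H).toLinearMap ∘ₗ q.rTensor H ∘ₗ twistLeft) ∘ₗ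
        (mulRight k h).lTensor H ∘ₗ comul := by
  have lid_mul (u : H ⊗[k] H) (y : H) : TensorProduct.lid k H (q.rTensor H ((1 ⊗ₜ y) * u)) =
      y * TensorProduct.lid k H (q.rTensor H u) := by
    induction u using TensorProduct.induction_on with
    | zero => simp
    | tmul c d => simp
    | add u v hu hv => simp [mul_add, hu, hv]
  have lTensor_eq (u : H ⊗[k] H) : (mulRight k h).lTensor H u = u * (1 ⊗ₜ h) := by
    rw [← mulRight_apply (R := k), mulRight_tmul, mulRight_one]; rfl
  ext y
  simp [lTensor_eq, twistLeft_mul_one_tmul, twistLeft_comul, lid_mul, swl]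

theorem apply_swr_eq_apply_swl (f q : H →ₗ[k] k) (h : H) : q (swr f h) = f (swl q h) := by
  simp only [swr, swl, coe_comp, LinearEquiv.coe_coe, Function.comp_apply]
  induction comul (R := k) h using TensorProduct.induction_on with
  | zero => simp
  | tmul x y => simp [mul_comm]
  | add u v hu hv => simp [hu, hv]

theorem swr_eq_smul_one_iff (f : H →ₗ[k] k) (h : H) :
    swr f h = f h • 1 ↔ ∀ q : H →ₗ[k] k, f (swl q h) = q 1 * f h := by
  rw [← sub_eq_zero, ← Module.forall_dual_apply_eq_zero_iff k]
  simp [apply_swr_eq_apply_swl, sub_eq_zero, mul_comm]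

theorem swl_eq_smul_one_iff (f : H →ₗ[k] k) (h : H) :
    swl f h = f h • 1 ↔ ∀ q : H →ₗ[k] k, f (swr q h) = q 1 * f h := by
  rw [← sub_eq_zero, ← Module.forall_dual_apply_eq_zero_iff k]
  simp [apply_swr_eq_apply_swl, sub_eq_zero, mul_comm]

section Involutive

variable (hS : ∀ x : H, antipode k (antipode k x) = x)
include hS

theorem mul_antipode_lTensor_comm_comul :
    mul' k H ∘ₗ (antipode k).lTensor H ∘ₗ (TensorProduct.comm k H H).toLinearMap ∘ₗ comul =
      Algebra.linearMap k H ∘ₗ counit := by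
  have swap (u : H ⊗[k] H) : mul' k H ((antipode k).lTensor H (TensorProduct.comm k H H u)) =
      antipode k (mul' k H ((antipode k).lTensor H u)) := by
    induction u using TensorProduct.induction_on with
    | zero => simp
    | tmul a b => simp [antipode_mul_antidistrib, hS]
    | add u v hu hv => simp only [map_add, hu, hv]
  ext x
  simp [swap, mul_antipode_lTensor_comul_apply, Algebra.algebraMap_eq_smul_one]

theorem mul_antipode_rTensor_comm_comul :
    mul' k H ∘ₗ (antipode k).rTensor H ∘ₗ (TensorProduct.comm k H H).toLinearMap ∘ₗ comul =
      Algebra.linearMap k H ∘ₗ counit := by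
  have swap (u : H ⊗[k] H) : mul' k H ((antipode k).rTensor H (TensorProduct.comm k H H u)) =
      antipode k (mul' k H ((antipode k).rTensor H u)) := by
    induction u using TensorProduct.induction_on with
    | zero => simp
    | tmul a b => simp [antipode_mul_antidistrib, hS]
    | add u v hu hv => simp only [map_add, hu, hv]
  ext x
  simp [swap, mul_antipode_rTensor_comul_apply, Algebra.algebraMap_eq_smul_one]

/-- With `A = (id ⊗ q) ∘ twistRight`, the left side is the partial trace of `(f ⊗ id) ∘ Δ ∘ A`
over the second factor, computed in the basis `b`. -/
theorem sum_comp_comul_comp_twistRight (q : H →ₗ[k] k) (f : Module.End k H) {ι : Type*}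
    [Fintype ι] (b : Module.Basis ι k H) :
    ∑ j, ((TensorProduct.rid k H).toLinearMap ∘ₗ (b.coord j).lTensor H) ∘ₗ
        ((f.rTensor H ∘ₗ comul) ∘ₗ (TensorProduct.rid k H).toLinearMap ∘ₗ q.lTensor H ∘ₗ
          twistRight) ∘ₗ (TensorProduct.mk k H H).flip (b j) = q 1 • f := by
  set P : H ⊗[k] H →ₗ[k] H :=
    mul' k H ∘ₗ (antipode k).lTensor H ∘ₗ (TensorProduct.comm k H H).toLinearMap
  set Θ : (H ⊗[k] H) ⊗[k] H →ₗ[k] H := (TensorProduct.rid k H).toLinearMap ∘ₗ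
    (q ∘ₗ P).lTensor H ∘ₗ (TensorProduct.assoc k H H H).toLinearMap
  have dual_basis (w : H ⊗[k] H) (y : H) : ∑ j, q (y * antipode k (b j)) •
      TensorProduct.rid k H ((b.coord j).lTensor H w) = Θ (w ⊗ₜ y) := by
    induction w using TensorProduct.induction_on with
    | zero => simp
    | tmul x z =>
      have expand : q (y * antipode k z) = ∑ j, b.repr z j * q (y * antipode k (b j)) := by
        conv_lhs => rw [← b.sum_repr z]
        simp only [map_sum, map_smul, Finset.mul_sum, mul_smul_comm, smul_eq_mul]
      simp [Θ, P, expand, smul_smul, Finset.sum_smul, mul_comm]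
    | add u v hu hv => simp [add_tmul, ← hu, ← hv, Finset.sum_add_distrib]
  have sum_eq (v : H ⊗[k] H) : ∑ j, TensorProduct.rid k H ((b.coord j).lTensor H
      (comul (TensorProduct.rid k H (q.lTensor H (v * (1 ⊗ₜ antipode k (b j))))))) =
        Θ (comul.rTensor H v) := by
    induction v using TensorProduct.induction_on with
    | zero => simp
    | tmul x y => simp [← dual_basis]
    | add u v hu hv => simp [add_mul, ← hu, ← hv, Finset.sum_add_distrib]
  have counit_eq : (q ∘ₗ P) ∘ₗ comul = (q ∘ₗ Algebra.linearMap k H) ∘ₗ counit := by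
    simp only [P, comp_assoc, mul_antipode_lTensor_comm_comul hS]
  have natural (c : H →ₗ[k] k) (w : H ⊗[k] H) :
      TensorProduct.rid k H (c.lTensor H (f.rTensor H w)) =
        f (TensorProduct.rid k H (c.lTensor H w)) := by
    induction w using TensorProduct.induction_on with
    | zero => simp
    | tmul x y => simp
    | add u v hu hv => simp [hu, hv]
  ext a
  calc _ = f (Θ (comul.rTensor H (comul a))) := by simp [twistRight_tmul, natural, ← sum_eq]
    _ = f (TensorProduct.rid k H (((q ∘ₗ P) ∘ₗ comul).lTensor H (comul a))) := by
      simp [Θ, lTensor_comp_apply]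
    _ = q 1 • f a := by
      rw [counit_eq, lTensor_comp_apply, lTensor_counit_comul]
      simp

theorem sum_comp_comul_comp_twistLeft (q : H →ₗ[k] k) (f : Module.End k H) {ι : Type*}
    [Fintype ι] (b : Module.Basis ι k H) :
    ∑ i, ((TensorProduct.lid k H).toLinearMap ∘ₗ (b.coord i).rTensor H) ∘ₗ
        ((f.lTensor H ∘ₗ comul) ∘ₗ (TensorProduct.lid k H).toLinearMap ∘ₗ q.rTensor H ∘ₗ
          twistLeft) ∘ₗ TensorProduct.mk k H H (b i) = q 1 • f := by
  set P : H ⊗[k] H →ₗ[k] H :=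
    mul' k H ∘ₗ (antipode k).rTensor H ∘ₗ (TensorProduct.comm k H H).toLinearMap
  set Θ : H ⊗[k] (H ⊗[k] H) →ₗ[k] H := (TensorProduct.lid k H).toLinearMap ∘ₗ
    (q ∘ₗ P).rTensor H ∘ₗ (TensorProduct.assoc k H H H).symm.toLinearMap
  have dual_basis (w : H ⊗[k] H) (y : H) : ∑ i, q (antipode k (b i) * y) •
      TensorProduct.lid k H ((b.coord i).rTensor H w) = Θ (y ⊗ₜ w) := by
    induction w using TensorProduct.induction_on with
    | zero => simp
    | tmul z x =>
      have expand : q (antipode k z * y) = ∑ i, b.repr z i * q (antipode k (b i) * y) := by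
        conv_lhs => rw [← b.sum_repr z]
        simp only [map_sum, map_smul, Finset.sum_mul, smul_mul_assoc, smul_eq_mul]
      simp [Θ, P, expand, smul_smul, Finset.sum_smul, mul_comm]
    | add u v hu hv => simp [tmul_add, ← hu, ← hv, Finset.sum_add_distrib]
  have sum_eq (v : H ⊗[k] H) : ∑ i, TensorProduct.lid k H ((b.coord i).rTensor H
      (comul (TensorProduct.lid k H (q.rTensor H ((antipode k (b i) ⊗ₜ 1) * v))))) =
        Θ (comul.lTensor H v) := by
    induction v using TensorProduct.induction_on with
    | zero => simp
    | tmul x y => simp [← dual_basis]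
    | add u v hu hv => simp [mul_add, ← hu, ← hv, Finset.sum_add_distrib]
  have counit_eq : (q ∘ₗ P) ∘ₗ comul = (q ∘ₗ Algebra.linearMap k H) ∘ₗ counit := by
    simp only [P, comp_assoc, mul_antipode_rTensor_comm_comul hS]
  have natural (c : H →ₗ[k] k) (w : H ⊗[k] H) :
      TensorProduct.lid k H (c.rTensor H (f.lTensor H w)) =
        f (TensorProduct.lid k H (c.rTensor H w)) := by
    induction w using TensorProduct.induction_on with
    | zero => simp
    | tmul x y => simp
    | add u v hu hv => simp [hu, hv]
  ext a
  calc _ = f (Θ (comul.lTensor H (comul a))) := by simp [twistLeft_tmul, natural, ← sum_eq]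
    _ = f (TensorProduct.lid k H (((q ∘ₗ P) ∘ₗ comul).rTensor H (comul a))) := by
      simp [Θ, rTensor_comp_apply]
    _ = q 1 • f a := by
      rw [counit_eq, rTensor_comp_apply, rTensor_counit_comul]
      simp

section FiniteDimensional

variable [FiniteDimensional k H]

theorem trace_mulLeft_swr (q : H →ₗ[k] k) (h : H) :
    trace k H (mulLeft k (swr q h)) = q 1 * trace k H (mulLeft k h) := by
  rw [mulLeft_swr, trace_comp_comm', trace_eq_trace_sum_comp_of_sum_comp_eq_id _ _
    (sum_mk_flip_comp_lTensor_coord (Module.finBasis k H)), sum_comp_comul_comp_twistRight hS,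
    map_smul, smul_eq_mul]

theorem trace_mulRight_swl (q : H →ₗ[k] k) (h : H) :
    trace k H (mulRight k (swl q h)) = q 1 * trace k H (mulRight k h) := by
  rw [mulRight_swl, trace_comp_comm', trace_eq_trace_sum_comp_of_sum_comp_eq_id _ _
    (sum_mk_comp_rTensor_coord (Module.finBasis k H)), sum_comp_comul_comp_twistLeft hS,
    map_smul, smul_eq_mul]

theorem trace_mulLeft_eq_trace_mulRight (hdim : (Module.finrank k H : k) ≠ 0) (x : H) :
    trace k H (mulLeft k x) = trace k H (mulRight k x) := by
  have key : trace k H (mulLeft k (swr (trace k H ∘ₗ (mul k H).flip) x)) =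
      trace k H (mulRight k (swl (trace k H ∘ₗ mul k H) x)) :=
    apply_swr_eq_apply_swl _ (trace k H ∘ₗ mul k H) x
  rw [trace_mulLeft_swr hS, trace_mulRight_swl hS] at key
  change trace k H (mulRight k 1) * _ = trace k H (mulLeft k 1) * _ at key
  rw [mulLeft_one, mulRight_one, trace_id] at key
  exact mul_left_cancel₀ hdim key

theorem swl_trace_comp_mul (h : H) :
    swl (trace k H ∘ₗ mul k H) h = trace k H (mulLeft k h) • 1 :=
  (swl_eq_smul_one_iff _ h).2 fun q => trace_mulLeft_swr hS q h

theorem swr_trace_comp_mul (hdim : (Module.finrank k H : k) ≠ 0) (h : H) :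
    swr (trace k H ∘ₗ mul k H) h = trace k H (mulLeft k h) • 1 := by
  refine (swr_eq_smul_one_iff _ h).2 fun q => ?_
  change trace k H (mulLeft k _) = q 1 * trace k H (mulLeft k h)
  rw [trace_mulLeft_eq_trace_mulRight hS hdim, trace_mulLeft_eq_trace_mulRight hS hdim,
    trace_mulRight_swl hS]

end FiniteDimensional

end Involutive

/-- `H` finite-dimensional Hopf algebra over `k` with `S² = id` and
`dim_k(H)·1 ≠ 0` in `k`.  For a basis `(eᵢ)` with dual basis `(eⁱ)`, the functional
`λ(x) = Σᵢ eⁱ(x·eᵢ)` equals `x ↦ Σᵢ eⁱ(eᵢ·x)`, is nonzero, is a two-sided integral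
for `H` in `H⁎`, and is cocommutative. -/
theorem statement19 [FiniteDimensional k H]
    (hS2 : ∀ h : H, HopfAlgebra.antipode (R := k) (HopfAlgebra.antipode (R := k) h) = h)
    (hdim : (Module.finrank k H : k) ≠ 0)
    {ι : Type*} [Fintype ι] (b : Module.Basis ι k H)
    (lam : H →ₗ[k] k)
    (hlam : lam = ∑ i : ι, (b.coord i) ∘ₗ (LinearMap.mulRight k (b i))) :
    lam = (∑ i : ι, (b.coord i) ∘ₗ (LinearMap.mulLeft k (b i))) ∧
    lam ≠ 0 ∧
    (∀ h : H, swr lam h = lam h • (1 : H)) ∧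
    (∀ h : H, swl lam h = lam h • (1 : H)) ∧
    (∀ x y : H, lam (x * y) = lam (y * x)) := by
  have hlam' : lam = trace k H ∘ₗ mul k H := by
    ext x; simp [hlam, trace_eq_sum_coord b]
  have hrho : ∑ i, b.coord i ∘ₗ mulLeft k (b i) = trace k H ∘ₗ (mul k H).flip := by
    ext x; simp [trace_eq_sum_coord b]
  subst hlam'
  refine ⟨?_, ?_, swr_trace_comp_mul hS2 hdim, swl_trace_comp_mul hS2, fun x y => ?_⟩
  · rw [hrho]
    ext x
    exact trace_mulLeft_eq_trace_mulRight hS2 hdim x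
  · intro h0
    have h1 := congr($h0 1)
    change trace k H (mulLeft k 1) = 0 at h1
    rw [mulLeft_one, trace_id] at h1
    exact hdim h1
  · change trace k H (mulLeft k (x * y)) = trace k H (mulLeft k (y * x))
    rw [mulLeft_mul, mulLeft_mul, ← Module.End.mul_eq_comp, ← Module.End.mul_eq_comp,
      trace_mul_comm]
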